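/- Assume χ < C_N. Then solutions of the gradient flow of F^N_m do not blow up in finite time: for every solution X : [0,T) → ℝ^N of the gradient flow with T < ∞, there exists ε > 0 such that X_{i+1}(t) − X_i(t) ≥ ε for all t ∈ [0,T) and all 1 ≤ i ≤ N−1 (so the maximal solution issued from any X_0 ∈ R^N is defined on all of [0,∞)). -/

import Mathlib

open scoped BigOperators
noncomputable section

/-- Internal (diffusion) part: sum of (X_{i+1} - X_i)^(1-m) over consecutive gaps. -/
def gapSum (m : ℝ) (p : ℕ) (X : EuclideanSpace ℝ (Fin p)) : ℝ :=
  ∑ i : Fin p, if h : (i : ℕ) + 1 < p then (X ⟨(i : ℕ) + 1, h⟩ - X i) ^ (1 - m) else 0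

/-- Interaction part: sum of |X_i - X_j|^(1-m) over ordered pairs i ≠ j. -/
def pairSum (m : ℝ) (p : ℕ) (X : EuclideanSpace ℝ (Fin p)) : ℝ :=
  ∑ i : Fin p, ∑ j : Fin p, if i ≠ j then |X i - X j| ^ (1 - m) else 0

/-- The discrete free energy F^p_m. -/
def FF (m χ : ℝ) (p : ℕ) (X : EuclideanSpace ℝ (Fin p)) : ℝ :=
  (m - 1)⁻¹ * gapSum m p X - (χ / (m - 1)) * pairSum m p X

/-- Membership in R^p: strictly increasing with zero mean. -/
def memR (p : ℕ) (X : EuclideanSpace ℝ (Fin p)) : Prop :=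
  (StrictMono fun i => X i) ∧ ∑ i, X i = 0

/-- The critical constant C_p, with 1/C_p the sup of the HLS ratio. -/
def Cp (m : ℝ) (p : ℕ) : ℝ :=
  (sSup {r : ℝ | ∃ X : EuclideanSpace ℝ (Fin p), memR p X ∧
    r = pairSum m p X / gapSum m p X})⁻¹

/-- The functional F^p_{m,α} with confining quadratic potential. -/
def FFa (m χ α : ℝ) (p : ℕ) (X : EuclideanSpace ℝ (Fin p)) : ℝ :=
  FF m χ p X + α / 2 * ‖X‖ ^ 2

/-- H^N_{m+1}(Y) = |∇F^N_m(Y)|² − ((m−1) F^N_m(Y))². -/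
def Hfun (m χ : ℝ) (N : ℕ) (Y : EuclideanSpace ℝ (Fin N)) : ℝ :=
  ‖gradient (FF m χ N) Y‖ ^ 2 - ((m - 1) * FF m χ N Y) ^ 2

/-- X : [0,T) → R^N is a solution of the gradient flow of F^N_m. -/
def isGFlow (m χ : ℝ) (N : ℕ) (T : ℝ) (X : ℝ → EuclideanSpace ℝ (Fin N)) : Prop :=
  ∀ t ∈ Set.Ico (0 : ℝ) T, memR N (X t) ∧
    HasDerivWithinAt X (-(gradient (FF m χ N) (X t))) (Set.Ico (0 : ℝ) T) t

/-- The gap Y_{i+1} - Y_i (0 if i+1 is out of range). -/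
def gapAt (N : ℕ) (Y : EuclideanSpace ℝ (Fin N)) (i : ℕ) : ℝ :=
  if h : i + 1 < N then Y ⟨i + 1, h⟩ - Y ⟨i, Nat.lt_of_succ_lt h⟩ else 0

/-!
The energy `F^N_m` decreases along the flow. Below the critical constant it controls the
diffusion part: `F^N_m ≥ (1 - χ / C_N) / (m - 1) · Σ (X_{i+1} - X_i)^{1-m}`, so this sum stays
bounded by `F^N_m(X(0))` up to a constant, and since `1 - m < 0` each single gap is bounded below.
-/

open Set

section Gaps

variable {m : ℝ} {p : ℕ} {Y : EuclideanSpace ℝ (Fin p)}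

lemma gapAt_pos (hY : StrictMono fun i => Y i) {i : ℕ} (hi : i + 1 < p) : 0 < gapAt p Y i := by
  rw [gapAt, dif_pos hi, sub_pos]
  exact hY (Fin.mk_lt_mk.mpr i.lt_succ_self)

lemma gapSum_eq_sum_gapAt :
    gapSum m p Y = ∑ i : Fin p, if (i : ℕ) + 1 < p then gapAt p Y i ^ (1 - m) else 0 :=
  Finset.sum_congr rfl fun i _ => by split_ifs with h <;> simp [gapAt, h]

lemma gapSum_summand_nonneg (hY : StrictMono fun i => Y i) (i : Fin p) :
    0 ≤ if (i : ℕ) + 1 < p then gapAt p Y i ^ (1 - m) else 0 := by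
  split_ifs with hi
  exacts [(Real.rpow_pos_of_pos (gapAt_pos hY hi) _).le, le_rfl]

lemma gapSum_nonneg (hY : StrictMono fun i => Y i) : 0 ≤ gapSum m p Y :=
  gapSum_eq_sum_gapAt (m := m) ▸ Finset.sum_nonneg fun i _ => gapSum_summand_nonneg hY i

lemma gapAt_rpow_le_gapSum (hY : StrictMono fun i => Y i) {i : ℕ} (hi : i + 1 < p) :
    gapAt p Y i ^ (1 - m) ≤ gapSum m p Y := by
  rw [gapSum_eq_sum_gapAt]
  exact le_of_eq_of_le (if_pos hi).symm <| Finset.single_le_sum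
    (fun j _ => gapSum_summand_nonneg hY j) (Finset.mem_univ ⟨i, Nat.lt_of_succ_lt hi⟩)

lemma gapSum_pos (hp : 2 ≤ p) (hY : StrictMono fun i => Y i) : 0 < gapSum m p Y := by
  have h0 : 0 + 1 < p := by omega
  exact (Real.rpow_pos_of_pos (gapAt_pos hY h0) _).trans_le (gapAt_rpow_le_gapSum hY h0)

lemma abs_sub_rpow_le_gapSum (hm : 1 ≤ m) (hY : StrictMono fun i => Y i) {i j : Fin p}
    (hij : i ≠ j) : |Y i - Y j| ^ (1 - m) ≤ gapSum m p Y := by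
  wlog hlt : i < j generalizing i j
  · rw [abs_sub_comm]
    exact this hij.symm (hij.symm.lt_of_le (not_lt.mp hlt))
  have hi : (i : ℕ) + 1 < p := lt_of_le_of_lt hlt j.isLt
  have hnext : Y ⟨(i : ℕ) + 1, hi⟩ ≤ Y j := hY.monotone (Fin.mk_le_of_le_val hlt)
  calc |Y i - Y j| ^ (1 - m) ≤ gapAt p Y i ^ (1 - m) := by
        rw [abs_sub_comm, abs_of_pos (sub_pos.mpr (hY hlt))]
        refine Real.rpow_le_rpow_of_nonpos (gapAt_pos hY hi) ?_ (by linarith)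
        rw [gapAt, dif_pos hi]
        exact sub_le_sub_right hnext _
    _ ≤ gapSum m p Y := gapAt_rpow_le_gapSum hY hi

lemma pairSum_le_sq_mul_gapSum (hm : 1 ≤ m) (hY : StrictMono fun i => Y i) :
    pairSum m p Y ≤ (p : ℝ) ^ 2 * gapSum m p Y := by
  have hterm (i j : Fin p) : (if i ≠ j then |Y i - Y j| ^ (1 - m) else 0) ≤ gapSum m p Y := by
    split_ifs with hij
    exacts [abs_sub_rpow_le_gapSum hm hY hij, gapSum_nonneg hY]
  calc pairSum m p Y ≤ ∑ _i : Fin p, ∑ _j : Fin p, gapSum m p Y :=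
        Finset.sum_le_sum fun i _ => Finset.sum_le_sum fun j _ => hterm i j
    _ = (p : ℝ) ^ 2 * gapSum m p Y := by simp [sq, mul_assoc]

end Gaps

section Energy

variable {m χ : ℝ} {p : ℕ} {Y : EuclideanSpace ℝ (Fin p)}

lemma pairSum_le_inv_Cp_mul_gapSum (hp : 2 ≤ p) (hm : 1 ≤ m) (hY : memR p Y) :
    pairSum m p Y ≤ (Cp m p)⁻¹ * gapSum m p Y := by
  have hgap := gapSum_pos (m := m) hp hY.1
  have hbdd : BddAbove {r : ℝ | ∃ Z : EuclideanSpace ℝ (Fin p), memR p Z ∧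
      r = pairSum m p Z / gapSum m p Z} := by
    refine ⟨(p : ℝ) ^ 2, ?_⟩
    rintro _ ⟨Z, hZ, rfl⟩
    exact (div_le_iff₀ (gapSum_pos hp hZ.1)).mpr (pairSum_le_sq_mul_gapSum hm hZ.1)
  rw [Cp, inv_inv, ← div_le_iff₀ hgap]
  exact le_csSup hbdd ⟨Y, hY, rfl⟩

lemma mul_gapSum_le_FF (hp : 2 ≤ p) (hm : 1 < m) (hχ : 0 ≤ χ) (hY : memR p Y) :
    (1 - χ / Cp m p) / (m - 1) * gapSum m p Y ≤ FF m χ p Y := by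
  have hpair := mul_le_mul_of_nonneg_left (pairSum_le_inv_Cp_mul_gapSum hp hm.le hY) hχ
  have hFF : FF m χ p Y = (gapSum m p Y - χ * pairSum m p Y) / (m - 1) := by rw [FF]; ring
  rw [hFF, div_mul_eq_mul_div]
  gcongr
  rw [div_eq_mul_inv]
  linarith

end Energy

section Differentiability

variable {m χ : ℝ} {p : ℕ} {Y : EuclideanSpace ℝ (Fin p)}

lemma differentiableAt_gapSum (hY : StrictMono fun i => Y i) :
    DifferentiableAt ℝ (gapSum m p) Y := by
  unfold gapSum
  refine DifferentiableAt.fun_sum fun i _ => ?_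
  split_ifs with hi
  · have hgap := gapAt_pos hY hi
    rw [gapAt, dif_pos hi] at hgap
    exact ((EuclideanSpace.proj _).differentiableAt.sub
      (EuclideanSpace.proj i).differentiableAt).rpow_const (Or.inl hgap.ne')
  · exact differentiableAt_const 0

lemma differentiableAt_pairSum (hY : Function.Injective fun i => Y i) :
    DifferentiableAt ℝ (pairSum m p) Y := by
  unfold pairSum
  refine DifferentiableAt.fun_sum fun i _ => DifferentiableAt.fun_sum fun j _ => ?_
  split_ifs with hij
  · have hne : Y i - Y j ≠ 0 := sub_ne_zero.mpr (hY.ne hij)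
    exact (((EuclideanSpace.proj i).differentiableAt.sub
      (EuclideanSpace.proj j).differentiableAt).abs hne).rpow_const
        (Or.inl (abs_ne_zero.mpr hne))
  · exact differentiableAt_const 0

lemma differentiableAt_FF (hY : StrictMono fun i => Y i) : DifferentiableAt ℝ (FF m χ p) Y :=
  ((differentiableAt_gapSum hY).const_mul _).sub
    ((differentiableAt_pairSum hY.injective).const_mul _)

end Differentiability

lemma antitoneOn_comp_of_hasDerivWithinAt_neg_gradient {E : Type*} [NormedAddCommGroup E]
    [InnerProductSpace ℝ E] [CompleteSpace E] {f : E → ℝ} {x : ℝ → E} {s : Set ℝ}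
    (hs : Convex ℝ s) (hf : ∀ t ∈ s, DifferentiableAt ℝ f (x t))
    (hx : ∀ t ∈ s, HasDerivWithinAt x (-gradient f (x t)) s t) :
    AntitoneOn (f ∘ x) s := by
  have hderiv (t) (ht : t ∈ s) : HasDerivWithinAt (f ∘ x) (-‖gradient f (x t)‖ ^ 2) s t := by
    have := (hf t ht).hasGradientAt.hasFDerivAt.comp_hasDerivWithinAt t (hx t ht)
    rwa [InnerProductSpace.toDual_apply_apply, inner_neg_right, real_inner_self_eq_norm_sq]
      at this
  refine antitoneOn_of_hasDerivWithinAt_nonpos hs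
    (fun t ht => (hderiv t ht).continuousWithinAt)
    (fun t ht => (hderiv t (interior_subset ht)).mono interior_subset) fun t _ => ?_
  exact neg_nonpos.mpr (sq_nonneg _)

theorem stmt17 (N : ℕ) (hN : 2 ≤ N) (m χ : ℝ) (hm : 1 < m) (hχ : 0 < χ)
    (hsub : χ < Cp m N) (T : ℝ) (hT : 0 < T) (X : ℝ → EuclideanSpace ℝ (Fin N))
    (hflow : isGFlow m χ N T X) :
    ∃ ε : ℝ, 0 < ε ∧ ∀ t ∈ Set.Ico (0 : ℝ) T, ∀ i : ℕ, i + 1 < N →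
      ε ≤ gapAt N (X t) i := by
  set c := (1 - χ / Cp m N) / (m - 1)
  have hc : 0 < c := div_pos
    (sub_pos.mpr ((div_lt_one (hχ.trans hsub)).mpr hsub)) (sub_pos.mpr hm)
  have hdecay : AntitoneOn (FF m χ N ∘ X) (Ico 0 T) :=
    antitoneOn_comp_of_hasDerivWithinAt_neg_gradient (convex_Ico 0 T)
      (fun t ht => differentiableAt_FF (hflow t ht).1.1) fun t ht => (hflow t ht).2
  have h0 : (0 : ℝ) ∈ Ico 0 T := ⟨le_rfl, hT⟩
  set K := FF m χ N (X 0) / c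
  have hK : 0 < K := div_pos ((mul_pos hc (gapSum_pos hN (hflow 0 h0).1.1)).trans_le
    (mul_gapSum_le_FF hN hm hχ.le (hflow 0 h0).1)) hc
  refine ⟨K ^ (1 - m)⁻¹, Real.rpow_pos_of_pos hK _, fun t ht i hi => ?_⟩
  have hY := (hflow t ht).1
  rw [Real.rpow_inv_le_iff_of_neg hK (gapAt_pos hY.1 hi) (by linarith)]
  calc gapAt N (X t) i ^ (1 - m) ≤ gapSum m N (X t) := gapAt_rpow_le_gapSum hY.1 hi
    _ ≤ FF m χ N (X t) / c := (le_div_iff₀' hc).mpr (mul_gapSum_le_FF hN hm hχ.le hY)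
    _ ≤ K := div_le_div_of_nonneg_right (hdecay h0 ht ht.1) hc.le
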